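/- arXiv:1711.03019 — 4 statements merged into one kernel-verified Lean document; each statement's English description precedes it below -/
import Mathlib

section
/- Let G be a graph on n vertices with m edges. If m ≥ C(n-1, 2) + 3 (where C denotes the binomial coefficient), then G is Hamilton-connected. -/
open SimpleGraph
open scoped Classical

/-- A graph is Hamilton-connected if every two distinct vertices are joined by a Hamilton path. -/
def HamiltonConnected {V : Type*} (G : SimpleGraph V) : Prop :=
  ∀ u v : V, u ≠ v → ∃ p : G.Walk u v, p.IsHamiltonian

/-- The real adjacency matrix of a graph. -/
noncomputable def adjMat {V : Type*} (G : SimpleGraph V) : Matrix V V ℝ :=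
  fun i j => if G.Adj i j then 1 else 0

/-- The signless Laplacian matrix `Q(G) = D(G) + A(G)`. -/
noncomputable def signlessLap {V : Type*} [Fintype V] (G : SimpleGraph V) : Matrix V V ℝ :=
  Matrix.diagonal (fun v => ((G.neighborSet v).ncard : ℝ)) + adjMat G

/-- The spectral radius of a graph: the largest eigenvalue of its adjacency matrix. -/
noncomputable def specRad {V : Type*} [Fintype V] (G : SimpleGraph V) : ℝ :=
  sSup {μ : ℝ | ∃ x : V → ℝ, x ≠ 0 ∧ (adjMat G).mulVec x = μ • x}

/-- The signless Laplacian spectral radius of a graph. -/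
noncomputable def qRad {V : Type*} [Fintype V] (G : SimpleGraph V) : ℝ :=
  sSup {μ : ℝ | ∃ x : V → ℝ, x ≠ 0 ∧ (signlessLap G).mulVec x = μ • x}

/-- The join `G ∨ H` of two graphs. -/
def djoin {α β : Type*} (G : SimpleGraph α) (H : SimpleGraph β) : SimpleGraph (α ⊕ β) :=
  SimpleGraph.fromRel (fun x y =>
    (∃ a b, G.Adj a b ∧ x = Sum.inl a ∧ y = Sum.inl b) ∨
    (∃ a b, H.Adj a b ∧ x = Sum.inr a ∧ y = Sum.inr b) ∨
    (∃ a b, x = Sum.inl a ∧ y = Sum.inr b))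

/-- `S_n^k = K_k ∨ (K_{n-(2k-1)} + (k-1)K_1)`. -/
def Sgraph (n k : ℕ) : SimpleGraph (Fin k ⊕ (Fin (n - (2 * k - 1)) ⊕ Fin (k - 1))) :=
  djoin ⊤ ((⊤ : SimpleGraph (Fin (n - (2 * k - 1)))) ⊕g (⊥ : SimpleGraph (Fin (k - 1))))

/-- `T_n^k = K_2 ∨ (K_{n-(k+1)} + K_{k-1})`. -/
def Tgraph (n k : ℕ) : SimpleGraph (Fin 2 ⊕ (Fin (n - (k + 1)) ⊕ Fin (k - 1))) :=
  djoin ⊤ ((⊤ : SimpleGraph (Fin (n - (k + 1)))) ⊕g (⊤ : SimpleGraph (Fin (k - 1))))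

/-- `G` is (isomorphic to) a graph obtained from `S` by deleting exactly `t` edges, keeping
minimum degree at least 3. -/
def DelFam {α β : Type*} (S : SimpleGraph β) (t : ℕ) (G : SimpleGraph α) : Prop :=
  ∃ H : SimpleGraph β, H ≤ S ∧ (S.edgeSet \ H.edgeSet).ncard = t ∧
    (∀ v, 3 ≤ (H.neighborSet v).ncard) ∧ Nonempty (G ≃g H)

/-- The graph `K_{n-1} + e + e'`: a complete graph on `n-1` vertices together with one extra
vertex joined to two vertices of the complete graph by the edges `e` and `e'`. -/
def KnEE (n : ℕ) : SimpleGraph (Fin (n - 1) ⊕ Fin 1) :=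
  SimpleGraph.fromRel (fun x y =>
    (∃ a b : Fin (n - 1), x = Sum.inl a ∧ y = Sum.inl b) ∨
    (∃ a : Fin (n - 1), (a : ℕ) ≤ 1 ∧ x = Sum.inl a ∧ ∃ b, y = Sum.inr b))

/-- The Kelmans transformation of `G` with respect to the vertices `u` and `v`: every edge
`vx` with `x ∈ N(v) \ N[u]` is replaced by the edge `ux`. -/
def kelmans {V : Type*} (G : SimpleGraph V) (u v : V) : SimpleGraph V :=
  SimpleGraph.fromRel (fun x y =>
    (x = u ∧ y ≠ v ∧ (G.Adj u y ∨ G.Adj v y)) ∨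
    (x = v ∧ y ≠ u ∧ G.Adj v y ∧ G.Adj u y) ∨
    (x = u ∧ y = v ∧ G.Adj u v) ∨
    (x ≠ u ∧ x ≠ v ∧ y ≠ u ∧ y ≠ v ∧ G.Adj x y))


section HCAux
open Finset
variable {V : Type*} [DecidableEq V]


noncomputable def hcDD (G : SimpleGraph V) (s : Finset V) (w : V) : ℕ :=
  (s.filter (fun x => x ≠ w ∧ ¬ G.Adj w x)).card

noncomputable def hcM2 (G : SimpleGraph V) (s : Finset V) : ℕ := ∑ x ∈ s, hcDD G s x

lemma hcDD_adj {G : SimpleGraph V} {s : Finset V} {w x : V} (h : hcDD G s w = 0)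
    (hx : x ∈ s) (hxw : x ≠ w) : G.Adj w x := by
  by_contra hadj
  have hmem : x ∈ s.filter (fun x => x ≠ w ∧ ¬ G.Adj w x) := by
    simp [Finset.mem_filter, hx, hxw, hadj]
  have hpos := Finset.card_pos.mpr ⟨x, hmem⟩
  rw [hcDD] at h
  omega

lemma hcDD_pos_of_mem {G : SimpleGraph V} {s : Finset V} {u x : V} (hu : u ∈ s)
    (hx : x ∈ s) (hxu : x ≠ u) (hna : ¬ G.Adj u x) : 1 ≤ hcDD G s x := by
  rw [hcDD]
  apply Finset.card_pos.mpr
  refine ⟨u, ?_⟩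
  rw [Finset.mem_filter]
  exact ⟨hu, Ne.symm hxu, fun h => hna h.symm⟩

lemma two_hcDD_le_hcM2 {G : SimpleGraph V} {s : Finset V} {u : V} (hu : u ∈ s) :
    2 * hcDD G s u ≤ hcM2 G s := by
  set N := s.filter (fun x => x ≠ u ∧ ¬ G.Adj u x) with hN
  have hNs : N ⊆ s := Finset.filter_subset _ _
  have huN : u ∉ N := by simp [hN]
  have h1 : ∀ x ∈ N, 1 ≤ hcDD G s x := by
    intro x hx
    rw [hN, Finset.mem_filter] at hx
    exact hcDD_pos_of_mem hu hx.1 hx.2.1 hx.2.2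
  have hcard : N.card ≤ ∑ x ∈ N, hcDD G s x := by
    calc N.card = ∑ _x ∈ N, 1 := by simp
    _ ≤ _ := Finset.sum_le_sum h1
  have hsub : insert u N ⊆ s := Finset.insert_subset hu hNs
  calc 2 * hcDD G s u = hcDD G s u + N.card := by rw [hcDD, ← hN]; omega
  _ ≤ hcDD G s u + ∑ x ∈ N, hcDD G s x := by omega
  _ = ∑ x ∈ insert u N, hcDD G s x := (Finset.sum_insert huN).symm
  _ ≤ ∑ x ∈ s, hcDD G s x := Finset.sum_le_sum_of_subset hsub
  _ = hcM2 G s := rfl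

lemma hcM2_erase {G : SimpleGraph V} {s : Finset V} {u : V} (hu : u ∈ s) :
    hcM2 G (s.erase u) + 2 * hcDD G s u = hcM2 G s := by
  have key : ∀ x ∈ s.erase u,
      hcDD G s x = hcDD G (s.erase u) x + (if ¬ G.Adj u x then 1 else 0) := by
    intro x hx
    rw [Finset.mem_erase] at hx
    have hfe : (s.erase u).filter (fun y => y ≠ x ∧ ¬ G.Adj x y)
        = (s.filter (fun y => y ≠ x ∧ ¬ G.Adj x y)).erase u :=
      Finset.filter_erase _ _ _
    by_cases hadj : G.Adj u x
    · have hnot : u ∉ s.filter (fun y => y ≠ x ∧ ¬ G.Adj x y) := by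
        simp [Finset.mem_filter, hadj.symm]
      rw [hcDD, hcDD, hfe, Finset.erase_eq_of_notMem hnot]
      simp [hadj]
    · have hmem : u ∈ s.filter (fun y => y ≠ x ∧ ¬ G.Adj x y) := by
        rw [Finset.mem_filter]
        exact ⟨hu, Ne.symm hx.1, fun h => hadj h.symm⟩
      have hc := Finset.card_erase_of_mem hmem
      have hp := Finset.card_pos.mpr ⟨u, hmem⟩
      rw [hcDD, hcDD, hfe]
      simp only [hadj, if_pos, not_false_iff]
      omega
  have h1 : hcM2 G s = hcDD G s u + ∑ x ∈ s.erase u, hcDD G s x := by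
    rw [hcM2, ← Finset.add_sum_erase _ _ hu]
  have h2 : ∑ x ∈ s.erase u, hcDD G s x
      = hcM2 G (s.erase u) + ∑ x ∈ s.erase u, (if ¬ G.Adj u x then 1 else 0) := by
    rw [hcM2, ← Finset.sum_add_distrib]
    exact Finset.sum_congr rfl key
  have h3 : ∑ x ∈ s.erase u, (if ¬ G.Adj u x then 1 else 0) = hcDD G s u := by
    have hb : ∑ x ∈ s.erase u, (if ¬ G.Adj u x then (1:ℕ) else 0)
        = ((s.erase u).filter (fun x => ¬ G.Adj u x)).card := by
      rw [Finset.sum_boole]; simp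
    rw [hb, hcDD]
    congr 1
    ext x
    simp only [Finset.mem_filter, Finset.mem_erase]
    constructor
    · rintro ⟨⟨hxu, hxs⟩, hna⟩; exact ⟨hxs, hxu, hna⟩
    · rintro ⟨hxs, hxu, hna⟩; exact ⟨⟨hxu, hxs⟩, hna⟩
  omega

lemma hcSplit (G : SimpleGraph V) (w : V) (p : V → Bool) :
    ∀ (n : ℕ) (l : List V), l.length ≤ n → l.Chain' G.Adj →
    (∀ x ∈ l, ¬ p x = true → G.Adj w x) →
    2 * (l.filter p).length + 2 ≤ l.length →
    ∃ l1 l2 : List V, l = l1 ++ l2 ∧ l1 ≠ [] ∧ l2 ≠ [] ∧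
      (∀ x ∈ l1.getLast?, G.Adj x w) ∧ (∀ y ∈ l2.head?, G.Adj w y) := by
  intro n
  induction n with
  | zero =>
    intro l hl _ _ hcount
    omega
  | succ n IH =>
    intro l hl hchain hadj hcount
    match l with
    | [] => simp at hcount
    | [a] => simp at hcount
    | a :: b :: rest =>
      have hab : G.Adj a b := (List.isChain_cons_cons.mp hchain).1
      have hcbr : (b :: rest).Chain' G.Adj := (List.isChain_cons_cons.mp hchain).2
      by_cases hpa : p a = true
      · -- a is bad: recurse on b :: rest
        have hlen : (b :: rest).length ≤ n := by simp at hl ⊢; omega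
        have hcount' : 2 * ((b :: rest).filter p).length + 2 ≤ (b :: rest).length := by
          have : (a :: b :: rest).filter p = a :: (b :: rest).filter p := by
            simp [List.filter_cons, hpa]
          rw [this] at hcount
          simp only [List.length_cons] at hcount ⊢
          omega
        obtain ⟨l1, l2, heq, h1, h2, h3, h4⟩ := IH (b :: rest) hlen hcbr
          (fun x hx hpx => hadj x (by simp [hx]) hpx) hcount'
        refine ⟨a :: l1, l2, by rw [heq]; rfl, by simp, h2, ?_, h4⟩
        obtain ⟨c, l1', rfl⟩ := List.exists_cons_of_ne_nil h1
        simpa using h3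
      · have hwa : G.Adj w a := hadj a (by simp) (by simp [hpa])
        by_cases hpb : p b = true
        · -- a good, b bad: recurse on rest
          have hlen : rest.length ≤ n := by simp at hl; omega
          have hcrest : rest.Chain' G.Adj := hcbr.tail
          have hcount' : 2 * (rest.filter p).length + 2 ≤ rest.length := by
            have : (a :: b :: rest).filter p = b :: rest.filter p := by
              simp [List.filter_cons, hpa, hpb]
            rw [this] at hcount
            simp at hcount ⊢
            omega
          obtain ⟨l1, l2, heq, h1, h2, h3, h4⟩ := IH rest hlen hcrest
            (fun x hx hpx => hadj x (by simp [hx]) hpx) hcount'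
          refine ⟨a :: b :: l1, l2, by rw [heq]; rfl, by simp, h2, ?_, h4⟩
          obtain ⟨c, l1', rfl⟩ := List.exists_cons_of_ne_nil h1
          simpa using h3
        · -- a good, b good: split here
          have hwb : G.Adj w b := hadj b (by simp) (by simp [hpb])
          exact ⟨[a], b :: rest, rfl, by simp, by simp,
            by simp; exact hwa.symm, by simp [hwb]⟩

lemma hcWalk (G : SimpleGraph V) :
    ∀ (l : List V) (u v : V), l.Chain' G.Adj → l.head? = some u → l.getLast? = some v →
    ∃ p : G.Walk u v, p.support = l := by
  intro l
  induction l with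
  | nil => intro u v _ h; simp at h
  | cons a rest IH =>
    intro u v hchain hhead hlast
    have hua : u = a := by simpa using hhead.symm
    subst hua
    match rest with
    | [] =>
      have hv : v = u := by simpa using hlast.symm
      subst hv
      exact ⟨SimpleGraph.Walk.nil, by simp⟩
    | b :: r =>
      have hab : G.Adj u b := (List.isChain_cons_cons.mp hchain).1
      obtain ⟨q, hq⟩ := IH b v (List.isChain_cons_cons.mp hchain).2 rfl
        (by rw [← hlast, List.getLast?_cons_cons])
      exact ⟨SimpleGraph.Walk.cons hab q, by simp [hq]⟩

lemma hcArith {T M d : ℕ} (A : (d+1) * T ≤ 2*M + 2*(d+1)) (B : T ≤ 2*d + 2)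
    (C : M + 8 ≤ 2*T) (D : 2*d ≤ M) : False := by
  zify at A B C D
  nlinarith [sq_nonneg ((T:ℤ) - 6),
    mul_le_mul_of_nonneg_right B (by positivity : (0:ℤ) ≤ (T:ℤ))]

lemma hcPick {G : SimpleGraph V} {s : Finset V} {u v : V} (hu : u ∈ s) (hv : v ∈ s)
    (huv : u ≠ v) (hdd : hcDD G s u + 4 ≤ s.card) :
    ∃ a ∈ s, a ≠ u ∧ a ≠ v ∧ G.Adj u a := by
  by_contra hno
  push_neg at hno
  have hsub : (s.erase v).erase u ⊆ s.filter (fun x => x ≠ u ∧ ¬ G.Adj u x) := by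
    intro x hx
    rw [Finset.mem_erase, Finset.mem_erase] at hx
    rw [Finset.mem_filter]
    exact ⟨hx.2.2, hx.1, hno x hx.2.2 hx.1 hx.2.1⟩
  have hc := Finset.card_le_card hsub
  rw [Finset.card_erase_of_mem (Finset.mem_erase.mpr ⟨huv, hu⟩),
    Finset.card_erase_of_mem hv] at hc
  rw [hcDD] at hdd
  omega

lemma hcMain (G : SimpleGraph V) :
    ∀ (t : ℕ) (s : Finset V) (u v : V), s.card = t → u ∈ s → v ∈ s → u ≠ v →
      4 ≤ s.card → hcM2 G s + 8 ≤ 2 * s.card →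
      ∃ l : List V, l.Chain' G.Adj ∧ l.Nodup ∧ l.toFinset = s ∧
        l.head? = some u ∧ l.getLast? = some v := by
  intro t
  induction t using Nat.strong_induction_on with
  | _ t IH =>
  intro s u v hst hu hv huv h4 hm2
  by_cases h1 : hcDD G s u = 0
  case neg =>
    -- Case 1 : remove u
    have hdd2 := two_hcDD_le_hcM2 (s := s) (u := u) (G := G) hu
    have hddpos : 1 ≤ hcDD G s u := Nat.pos_of_ne_zero h1
    obtain ⟨a, has, hau, hav, hadj⟩ := hcPick (G := G) hu hv huv (by omega)
    have hcard' : (s.erase u).card = t - 1 := by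
      rw [Finset.card_erase_of_mem hu, hst]
    have hm2' := hcM2_erase (s := s) (u := u) (G := G) hu
    obtain ⟨l, hch, hnd, htf, hhd, hlst⟩ := IH (t-1) (by omega) (s.erase u) a v
      hcard' (Finset.mem_erase.mpr ⟨hau, has⟩) (Finset.mem_erase.mpr ⟨Ne.symm huv, hv⟩)
      hav (by omega) (by omega)
    refine ⟨u :: l, ?_, ?_, ?_, rfl, ?_⟩
    · rw [List.Chain', List.isChain_cons]
      refine ⟨?_, hch⟩
      intro y hy
      rw [hhd] at hy
      simp only [Option.mem_some_iff] at hy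
      subst hy; exact hadj
    · rw [List.nodup_cons]
      refine ⟨fun hmem => ?_, hnd⟩
      rw [← List.mem_toFinset, htf, Finset.mem_erase] at hmem
      exact hmem.1 rfl
    · rw [List.toFinset_cons, htf, Finset.insert_erase hu]
    · rw [show (u :: l) = [u] ++ l from rfl, List.getLast?_append, hlst]; rfl
  case pos =>
  by_cases h2 : hcDD G s v = 0
  case neg =>
    -- Case 2 : remove v
    have hdd2 := two_hcDD_le_hcM2 (s := s) (u := v) (G := G) hv
    have hddpos : 1 ≤ hcDD G s v := Nat.pos_of_ne_zero h2
    obtain ⟨b, hbs, hbv, hbu, hadj⟩ := hcPick (G := G) hv hu (Ne.symm huv) (by omega)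
    have hcard' : (s.erase v).card = t - 1 := by
      rw [Finset.card_erase_of_mem hv, hst]
    have hm2' := hcM2_erase (s := s) (u := v) (G := G) hv
    obtain ⟨l, hch, hnd, htf, hhd, hlst⟩ := IH (t-1) (by omega) (s.erase v) u b
      hcard' (Finset.mem_erase.mpr ⟨huv, hu⟩) (Finset.mem_erase.mpr ⟨hbv, hbs⟩)
      (Ne.symm hbu) (by omega) (by omega)
    have hlne : l ≠ [] := by intro h; rw [h] at hhd; simp at hhd
    have hvl : v ∉ l := fun hmem => by
      rw [← List.mem_toFinset, htf, Finset.mem_erase] at hmem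
      exact hmem.1 rfl
    refine ⟨l ++ [v], ?_, ?_, ?_, ?_, List.getLast?_concat⟩
    · rw [List.Chain', List.isChain_append]
      refine ⟨hch, List.isChain_singleton v, ?_⟩
      intro x hx y hy
      rw [hlst] at hx
      simp only [Option.mem_some_iff, List.head?_cons] at hx hy
      subst hx; subst hy
      exact hadj.symm
    · rw [List.nodup_append]
      refine ⟨hnd, List.nodup_singleton v, ?_⟩
      intro x hx y hy hxy
      simp only [List.mem_singleton] at hy
      subst hy; subst hxy; exact hvl hx
    · rw [List.toFinset_append, htf]
      ext x
      simp only [Finset.mem_union, Finset.mem_erase, List.toFinset_cons,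
        List.toFinset_nil, Finset.insert_empty, Finset.mem_singleton]
      constructor
      · rintro (⟨_, hxs⟩ | rfl)
        · exact hxs
        · exact hv
      · intro hxs
        by_cases hxv : x = v
        · right; exact hxv
        · left; exact ⟨hxv, hxs⟩
    · rw [List.head?_append_of_ne_nil _ hlne]; exact hhd
  case pos =>
  by_cases h3 : hcM2 G s = 0
  case pos =>
    -- Case 3 : clique
    have hall : ∀ x ∈ s, hcDD G s x = 0 := by
      intro x hx
      have h3' : ∑ x ∈ s, hcDD G s x = 0 := h3
      exact Finset.sum_eq_zero_iff.mp h3' x hx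
    have hcliq : ∀ x ∈ s, ∀ y ∈ s, y ≠ x → G.Adj x y := fun x hx y hy hyx =>
      hcDD_adj (hall x hx) hy hyx
    set mid := ((s.erase u).erase v).toList with hmid
    have hmem_mid : ∀ x ∈ mid, x ∈ s ∧ x ≠ v ∧ x ≠ u := by
      intro x hx
      rw [hmid, Finset.mem_toList, Finset.mem_erase, Finset.mem_erase] at hx
      exact ⟨hx.2.2, hx.1, hx.2.1⟩
    have humid : u ∉ mid := fun h => ((hmem_mid u h).2.2) rfl
    have hvmid : v ∉ mid := fun h => ((hmem_mid v h).2.1) rfl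
    have hmidnd : mid.Nodup := Finset.nodup_toList _
    have hndall : ((u :: mid) ++ [v]).Nodup := by
      rw [List.nodup_append]
      refine ⟨List.nodup_cons.mpr ⟨humid, hmidnd⟩, List.nodup_singleton v, ?_⟩
      intro x hx y hy hxy
      simp only [List.mem_singleton] at hy
      subst hy; subst hxy
      rcases List.mem_cons.mp hx with h | h
      · exact huv (h.symm)
      · exact hvmid h
    have hmeml : ∀ x ∈ (u :: mid) ++ [v], x ∈ s := by
      intro x hx
      rcases List.mem_append.mp hx with h | h
      · rcases List.mem_cons.mp h with rfl | h
        · exact hu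
        · exact (hmem_mid x h).1
      · simp only [List.mem_singleton] at h; subst h; exact hv
    refine ⟨(u :: mid) ++ [v], ?_, hndall, ?_, ?_, List.getLast?_concat⟩
    · apply List.Pairwise.isChain
      exact hndall.imp_of_mem (fun {a b} ha hb hne =>
        hcliq a (hmeml a ha) b (hmeml b hb) (Ne.symm hne))
    · ext x
      rw [List.mem_toFinset]
      constructor
      · exact hmeml x
      · intro hxs
        by_cases hxu : x = u
        · subst hxu; exact List.mem_append_left _ List.mem_cons_self
        · by_cases hxv : x = v
          · subst hxv; exact List.mem_append_right _ (List.mem_singleton.mpr rfl)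
          · refine List.mem_append_left _ (List.mem_cons_of_mem _ ?_)
            rw [hmid, Finset.mem_toList, Finset.mem_erase, Finset.mem_erase]
            exact ⟨hxv, hxu, hxs⟩
    · rw [List.head?_append_of_ne_nil _ (List.cons_ne_nil _ _)]; rfl
  case neg =>
    -- Case 4 : remove an interior vertex w and re-insert it
    have h3' : ∑ x ∈ s, hcDD G s x ≠ 0 := h3
    obtain ⟨w0, hw0s, hw0⟩ := Finset.exists_ne_zero_of_sum_ne_zero h3'
    have key : ∃ w ∈ s, 1 ≤ hcDD G s w ∧ 2 * hcDD G s w + 3 ≤ s.card := by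
      by_contra hno
      push_neg at hno
      set d := hcDD G s w0 with hd
      set N := s.filter (fun x => x ≠ w0 ∧ ¬ G.Adj w0 x) with hN
      have hNcard : N.card = d := rfl
      have hw0N : w0 ∉ N := by simp [hN]
      have hTsub : insert w0 N ⊆ s := Finset.insert_subset hw0s (Finset.filter_subset _ _)
      have hdpos : 1 ≤ d := Nat.pos_of_ne_zero hw0
      have hbound : ∀ x ∈ insert w0 N, s.card ≤ 2 * hcDD G s x + 2 := by
        intro x hx
        rcases Finset.mem_insert.mp hx with rfl | hxN
        · have := hno x hw0s hdpos; omega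
        · rw [hN, Finset.mem_filter] at hxN
          have hp := hcDD_pos_of_mem hw0s hxN.1 hxN.2.1 hxN.2.2
          have := hno x hxN.1 hp; omega
      have hTcard : (insert w0 N).card = d + 1 := by
        rw [Finset.card_insert_of_notMem hw0N, hNcard]
      have hsub_sum : ∑ x ∈ insert w0 N, hcDD G s x ≤ hcM2 G s :=
        Finset.sum_le_sum_of_subset hTsub
      have hA : (d+1) * s.card ≤ 2 * hcM2 G s + 2 * (d+1) := by
        calc (d+1) * s.card = ∑ _x ∈ insert w0 N, s.card := by
              rw [Finset.sum_const, smul_eq_mul, hTcard]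
        _ ≤ ∑ x ∈ insert w0 N, (2 * hcDD G s x + 2) := Finset.sum_le_sum hbound
        _ = 2 * (∑ x ∈ insert w0 N, hcDD G s x) + 2 * (insert w0 N).card := by
              rw [Finset.sum_add_distrib, Finset.mul_sum, Finset.sum_const, smul_eq_mul,
                mul_comm ((insert w0 N).card) 2]
        _ ≤ 2 * hcM2 G s + 2 * (d+1) := by
              rw [hTcard]
              exact Nat.add_le_add_right (Nat.mul_le_mul_left 2 hsub_sum) _
      have hB : s.card ≤ 2*d + 2 := hbound w0 (Finset.mem_insert_self _ _)
      have hD : 2*d ≤ hcM2 G s := two_hcDD_le_hcM2 hw0s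
      exact hcArith hA hB hm2 hD
    obtain ⟨w, hws, hdw1, hdwb⟩ := key
    have hwu : w ≠ u := fun h => by rw [h] at hdw1; omega
    have hwv : w ≠ v := fun h => by rw [h] at hdw1; omega
    have hcard' : (s.erase w).card = t - 1 := by
      rw [Finset.card_erase_of_mem hws, hst]
    have hm2' := hcM2_erase (s := s) (u := w) (G := G) hws
    obtain ⟨l, hch, hnd, htf, hhd, hlst⟩ := IH (t-1) (by omega) (s.erase w) u v
      hcard' (Finset.mem_erase.mpr ⟨Ne.symm hwu, hu⟩)
      (Finset.mem_erase.mpr ⟨Ne.symm hwv, hv⟩) huv (by omega) (by omega)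
    have hlen : l.length = t - 1 := by
      rw [← List.toFinset_card_of_nodup hnd, htf, hcard']
    set p : V → Bool := fun x => decide (¬ G.Adj w x) with hp
    have hpfilter : (l.filter p).length = hcDD G s w := by
      have hndf : (l.filter p).Nodup := hnd.filter _
      rw [← List.toFinset_card_of_nodup hndf, List.toFinset_filter, htf, hcDD]
      congr 1
      ext x
      simp only [Finset.mem_filter, Finset.mem_erase, hp, decide_eq_true_eq]
      tauto
    obtain ⟨l1, l2, hsplit, hl1ne, hl2ne, hl1w, hl2w⟩ :=
      hcSplit G w p l.length l le_rfl hch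
        (fun x _ hpx => by
          simp only [hp, decide_eq_true_eq, not_not] at hpx
          exact hpx)
        (by rw [hpfilter, hlen]; omega)
    have hwl : w ∉ l := fun hmem => by
      rw [← List.mem_toFinset, htf, Finset.mem_erase] at hmem
      exact hmem.1 rfl
    obtain ⟨hc1, hc2, hcross⟩ := List.isChain_append.mp (hsplit ▸ hch)
    refine ⟨l1 ++ w :: l2, ?_, ?_, ?_, ?_, ?_⟩
    · rw [List.Chain', List.isChain_append]
      refine ⟨hc1, ?_, ?_⟩
      · rw [List.isChain_cons]
        exact ⟨hl2w, hc2⟩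
      · intro x hx y hy
        simp only [List.head?_cons, Option.mem_some_iff] at hy
        subst hy
        exact hl1w x hx
    · have hndl : (l1 ++ l2).Nodup := hsplit ▸ hnd
      rw [List.nodup_append] at hndl ⊢
      obtain ⟨hn1, hn2, hdisj⟩ := hndl
      have hw1 : w ∉ l1 := fun h => hwl (hsplit ▸ List.mem_append_left _ h)
      have hw2 : w ∉ l2 := fun h => hwl (hsplit ▸ List.mem_append_right _ h)
      refine ⟨hn1, List.nodup_cons.mpr ⟨hw2, hn2⟩, ?_⟩
      intro a ha b hamem hab
      rcases List.mem_cons.mp hamem with rfl | hal2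
      · exact hw1 (hab ▸ ha)
      · exact hdisj a ha b hal2 hab
    · rw [List.toFinset_append, List.toFinset_cons, Finset.union_insert,
        ← List.toFinset_append, ← hsplit, htf, Finset.insert_erase hws]
    · rw [List.head?_append_of_ne_nil _ hl1ne]
      rw [hsplit, List.head?_append_of_ne_nil _ hl1ne] at hhd
      exact hhd
    · rw [hsplit, List.getLast?_append] at hlst
      rw [List.getLast?_append, show (w :: l2) = [w] ++ l2 from rfl, List.getLast?_append]
      cases hg : l2.getLast? with
      | none =>
        obtain ⟨c, l2', rfl⟩ := List.exists_cons_of_ne_nil hl2ne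
        have : (c :: l2').getLast?.isSome = true := List.getLast?_isSome.mpr (List.cons_ne_nil _ _)
        rw [hg] at this
        simp at this
      | some z =>
        rw [hg] at hlst
        have hz : z = v := by simpa using hlst
        subst hz
        simp

lemma hcArith2 {n M m : ℕ} (h1 : M + 2*m + n = n*n) (h2 : (n-1)*(n-2) + 6 ≤ 2*m) :
    4 ≤ n ∧ M + 8 ≤ 2*n := by
  rcases n with _ | _ | k
  · omega
  · simp at h1 h2; omega
  · have e1 : (k+1+1) - 1 = k + 1 := by omega
    have e2 : (k+1+1) - 2 = k := by omega
    rw [e1, e2] at h2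
    have e3 : (k+1+1)*(k+1+1) = (k+1)*k + (3*k+4) := by ring
    rw [e3] at h1
    constructor <;> nlinarith [Nat.zero_le ((k+1)*k)]


end HCAux

theorem statement_0 (n : ℕ) (G : SimpleGraph (Fin n)) (m : ℕ)
    (hm : m = G.edgeSet.ncard) (h : (n - 1).choose 2 + 3 ≤ m) :
    HamiltonConnected G := by
  have hvert : ∀ v : Fin n, hcDD G Finset.univ v + G.degree v + 1 = n := by
    intro v
    have h1 : (Finset.univ.filter (fun x => ¬(x = v ∨ G.Adj v x))).card
        = hcDD G Finset.univ v := by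
      rw [hcDD]
      congr 1
      ext x
      simp [not_or]
    have h2 : (Finset.univ.filter (fun x => x = v ∨ G.Adj v x)).card = 1 + G.degree v := by
      rw [Finset.filter_or, Finset.card_union_of_disjoint]
      · congr 1
        · rw [Finset.filter_eq']
          simp
        · rw [SimpleGraph.degree, SimpleGraph.neighborFinset_eq_filter]
      · rw [Finset.disjoint_left]
        intro x hx1 hx2
        rw [Finset.mem_filter] at hx1 hx2
        rw [hx1.2] at hx2
        exact G.irrefl hx2.2
    have h3 := Finset.card_filter_add_card_filter_not
      (s := (Finset.univ : Finset (Fin n))) (p := fun x => x = v ∨ G.Adj v x)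
    rw [h1, h2, Finset.card_univ, Fintype.card_fin] at h3
    omega
  have hid : hcM2 G Finset.univ + 2 * G.edgeFinset.card + n = n * n := by
    have hs : ∑ v : Fin n, (hcDD G Finset.univ v + G.degree v + 1) = n * n := by
      rw [Finset.sum_congr rfl (fun v _ => hvert v)]
      simp [Finset.card_univ, mul_comm]
    rw [Finset.sum_add_distrib, Finset.sum_add_distrib] at hs
    rw [SimpleGraph.sum_degrees_eq_twice_card_edges] at hs
    simp only [Finset.sum_const, Finset.card_univ, Fintype.card_fin, smul_eq_mul,
      mul_one] at hs
    rw [hcM2]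
    omega
  have hmeq : m = G.edgeFinset.card := by
    rw [hm, Set.ncard_eq_toFinset_card', SimpleGraph.edgeFinset_card, Set.toFinset_card]
  have hch2 : (n-1)*(n-2) + 6 ≤ 2 * m := by
    have he : 2 * ((n-1).choose 2) = (n-1)*(n-2) := by
      rw [Nat.choose_two_right]
      have hev : 2 ∣ (n-1) * (n-1-1) := (Nat.even_mul_pred_self (n-1)).two_dvd
      rw [Nat.mul_div_cancel' hev]
      congr 1
    omega
  rw [hmeq] at hch2
  obtain ⟨h4, hM⟩ := hcArith2 hid hch2
  intro u v huv
  obtain ⟨l, hchain, hnd, htf, hhd, hlst⟩ := hcMain G n Finset.univ u v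
    (by simp) (Finset.mem_univ u) (Finset.mem_univ v) huv
    (by rw [Finset.card_univ, Fintype.card_fin]; omega)
    (by rw [Finset.card_univ, Fintype.card_fin]; omega)
  obtain ⟨p, hps⟩ := hcWalk G l u v hchain hhd hlst
  have hcount : ∀ x : Fin n, p.support.count x = 1 := by
    intro x
    rw [hps]
    exact List.count_eq_one_of_mem hnd
      (by rw [← List.mem_toFinset, htf]; exact Finset.mem_univ x)
  refine ⟨p, ?_⟩
  intro x
  convert hcount x using 2
  congr 1
  exact Subsingleton.elim _ _
end

section
/- Let G be a graph and let G* be obtained from G by a Kelmans transformation on two specified vertices u, v. Then ρ(G) ≤ ρ(G*). -/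
open SimpleGraph
open scoped Classical

/-!
For a nonnegative vector `x` with `x v ≤ x u`, the transformation only replaces terms `x v * x w`
of the quadratic form `xᵀ A x` by the larger `x u * x w`; if `x u < x v`, apply this to the
transformation with `u` and `v` exchanged, which yields the same graph up to the swap `u ↔ v`.
Taking `x = |f|` for an eigenvector `f` of `G` and comparing with the Rayleigh bound
`yᵀ A(G*) y ≤ ρ(G*) ‖y‖²` gives `ρ(G) ≤ ρ(G*)`.
-/

open Matrix

namespace Matrix

variable {n : Type*} [Fintype n]

theorem dotProduct_mulVec_of_mulVec_eq_smul {A : Matrix n n ℝ} {b : n → ℝ} {μ : ℝ}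
    (h : A *ᵥ b = μ • b) : b ⬝ᵥ A *ᵥ b = μ * (b ⬝ᵥ b) := by
  rw [h, dotProduct_smul, smul_eq_mul]

theorem dotProduct_self_nonneg (x : n → ℝ) : 0 ≤ x ⬝ᵥ x :=
  Finset.sum_nonneg fun i _ => mul_self_nonneg (x i)

theorem dotProduct_self_pos {x : n → ℝ} (hx : x ≠ 0) : 0 < x ⬝ᵥ x :=
  (dotProduct_self_nonneg x).lt_of_ne' (dotProduct_self_eq_zero.not.mpr hx)

theorem dotProduct_mulVec_le_abs {A : Matrix n n ℝ} (hA : ∀ i j, 0 ≤ A i j) (x : n → ℝ) :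
    x ⬝ᵥ A *ᵥ x ≤ |x| ⬝ᵥ A *ᵥ |x| := by
  simp only [dotProduct, mulVec, Finset.mul_sum]
  refine Finset.sum_le_sum fun i _ => Finset.sum_le_sum fun j _ => ?_
  calc x i * (A i j * x j) ≤ |x i * (A i j * x j)| := le_abs_self _
    _ = |x| i * (A i j * |x| j) := by simp [abs_mul, abs_of_nonneg (hA i j)]

theorem dotProduct_submatrix_mulVec_equiv {m : Type*} [Fintype m] (A : Matrix m m ℝ)
    (σ : n ≃ m) (x : n → ℝ) :
    x ⬝ᵥ A.submatrix σ σ *ᵥ x = (x ∘ σ.symm) ⬝ᵥ A *ᵥ (x ∘ σ.symm) := by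
  rw [submatrix_mulVec_equiv, ← comp_equiv_symm_dotProduct]

theorem IsHermitian.exists_eigenvalue_forall_dotProduct_mulVec_le [Nonempty n]
    {A : Matrix n n ℝ} (hA : A.IsHermitian) :
    ∃ μ, (∃ b ≠ 0, A *ᵥ b = μ • b) ∧ ∀ x, x ⬝ᵥ A *ᵥ x ≤ μ * (x ⬝ᵥ x) := by
  obtain ⟨i₀, -, hmax⟩ :=
    Finset.exists_max_image Finset.univ hA.eigenvalues Finset.univ_nonempty
  let b (i : n) : n → ℝ := hA.eigenvectorBasis i
  refine ⟨hA.eigenvalues i₀, ⟨b i₀, ?_, hA.mulVec_eigenvectorBasis i₀⟩, fun x => ?_⟩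
  · exact fun h => hA.eigenvectorBasis.orthonormal.ne_zero i₀ (by ext j; exact congrFun h j)
  have parseval : ∀ y, x ⬝ᵥ y = ∑ i, (b i ⬝ᵥ x) * (b i ⬝ᵥ y) := fun y => by
    simpa [EuclideanSpace.inner_eq_star_dotProduct, b, dotProduct_comm] using
      (hA.eigenvectorBasis.sum_inner_mul_inner (WithLp.toLp 2 x) (WithLp.toLp 2 y)).symm
  have eigen : ∀ i, b i ⬝ᵥ A *ᵥ x = hA.eigenvalues i * (b i ⬝ᵥ x) := fun i => by
    rw [dotProduct_mulVec, ← mulVec_transpose, (isHermitian_iff_isSymm.mp hA).eq,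
      hA.mulVec_eigenvectorBasis, smul_dotProduct, smul_eq_mul]
  rw [parseval, parseval x, Finset.mul_sum]
  refine Finset.sum_le_sum fun i _ => ?_
  rw [eigen, mul_left_comm]
  exact mul_le_mul_of_nonneg_right (hmax i (Finset.mem_univ i)) (mul_self_nonneg _)

theorem IsHermitian.dotProduct_mulVec_le_sSup {A : Matrix n n ℝ} (hA : A.IsHermitian)
    (x : n → ℝ) : x ⬝ᵥ A *ᵥ x ≤ sSup {μ : ℝ | ∃ b ≠ 0, A *ᵥ b = μ • b} * (x ⬝ᵥ x) := by
  cases isEmpty_or_nonempty n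
  · simp [dotProduct]
  obtain ⟨μ, hμ, hle⟩ := hA.exists_eigenvalue_forall_dotProduct_mulVec_le
  have hbdd : BddAbove {μ : ℝ | ∃ b ≠ 0, A *ᵥ b = μ • b} := by
    refine ⟨μ, fun ν ⟨b, hb, hν⟩ => le_of_mul_le_mul_right ?_ (dotProduct_self_pos hb)⟩
    rw [← dotProduct_mulVec_of_mulVec_eq_smul hν]
    exact hle b
  exact (hle x).trans (mul_le_mul_of_nonneg_right (le_csSup hbdd hμ) (dotProduct_self_nonneg x))

end Matrix

section Kelmans

variable {V : Type*}

theorem adjMat_comap_equiv {W : Type*} (H : SimpleGraph W) (σ : V ≃ W) :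
    adjMat (H.comap σ) = (adjMat H).submatrix σ σ :=
  rfl

theorem adjMat_isHermitian (G : SimpleGraph V) : (adjMat G).IsHermitian :=
  isHermitian_iff_isSymm.mpr (G.isSymm_adjMatrix (α := ℝ))

theorem adjMat_nonneg (G : SimpleGraph V) (i j : V) : 0 ≤ adjMat G i j := by
  unfold adjMat; split_ifs <;> norm_num

theorem dotProduct_mulVec_adjMat_le_specRad [Fintype V] (G : SimpleGraph V) (x : V → ℝ) :
    x ⬝ᵥ adjMat G *ᵥ x ≤ specRad G * (x ⬝ᵥ x) :=
  (adjMat_isHermitian G).dotProduct_mulVec_le_sSup x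

theorem specRad_nonneg [Fintype V] (G : SimpleGraph V) : 0 ≤ specRad G := by
  cases isEmpty_or_nonempty V
  · have hempty : {μ : ℝ | ∃ x : V → ℝ, x ≠ 0 ∧ (adjMat G).mulVec x = μ • x} = ∅ :=
      Set.eq_empty_iff_forall_notMem.mpr fun _ ⟨x, hx, _⟩ => hx (Subsingleton.elim x 0)
    rw [specRad, hempty, Real.sSup_empty]
  · obtain ⟨j⟩ := ‹Nonempty V›
    simpa [adjMat] using dotProduct_mulVec_adjMat_le_specRad G (Pi.single j 1)

def kelmansMovedSet (G : SimpleGraph V) (u v : V) : Set V :=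
  G.neighborSet v \ insert u (G.neighborSet u)

theorem adjMat_kelmans (G : SimpleGraph V) (u v : V) :
    adjMat (kelmans G u v) = adjMat G
      + vecMulVec (Pi.single u 1 - Pi.single v 1) ((kelmansMovedSet G u v).indicator 1)
      + vecMulVec ((kelmansMovedSet G u v).indicator 1) (Pi.single u 1 - Pi.single v 1) := by
  ext i j
  simp only [adjMat, kelmans, kelmansMovedSet, fromRel_adj, Matrix.add_apply, vecMulVec_apply,
    Pi.sub_apply, Pi.single_apply, Set.indicator_apply, Set.mem_sdiff, Set.mem_insert_iff,
    mem_neighborSet, Pi.one_apply]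
  split_ifs <;> grind [G.adj_comm, G.ne_of_adj]

theorem kelmans_comap_swap [DecidableEq V] (G : SimpleGraph V) (u v : V) :
    (kelmans G u v).comap (Equiv.swap u v) = kelmans G v u := by
  ext i j
  simp only [kelmans, comap_adj, fromRel_adj, Equiv.swap_apply_def]
  split_ifs <;> grind [G.adj_comm]

variable [Fintype V]

theorem dotProduct_mulVec_adjMat_le_kelmans (G : SimpleGraph V) (u v : V) {x : V → ℝ}
    (hx : 0 ≤ x) (hvu : x v ≤ x u) :
    x ⬝ᵥ adjMat G *ᵥ x ≤ x ⬝ᵥ adjMat (kelmans G u v) *ᵥ x := by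
  set a : V → ℝ := Pi.single u 1 - Pi.single v 1
  set b : V → ℝ := (kelmansMovedSet G u v).indicator 1
  have hb : 0 ≤ b ⬝ᵥ x := dotProduct_nonneg_of_nonneg (Set.indicator_nonneg (by simp)) hx
  have gain : x ⬝ᵥ (vecMulVec a b + vecMulVec b a) *ᵥ x = 2 * ((x u - x v) * (b ⬝ᵥ x)) := by
    simp only [a, add_mulVec, vecMulVec_mulVec, dotProduct_comm, op_smul_eq_smul, dotProduct_sub,
      dotProduct_single, mul_one, MulOpposite.op_sub, dotProduct_add, dotProduct_smul,
      smul_eq_mul, MulOpposite.smul_eq_mul_unop, MulOpposite.unop_sub, MulOpposite.unop_op]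
    ring
  rw [adjMat_kelmans, add_assoc, add_mulVec, dotProduct_add, gain]
  exact le_add_of_nonneg_right (mul_nonneg zero_le_two (mul_nonneg (sub_nonneg.2 hvu) hb))

theorem exists_dotProduct_mulVec_kelmans_ge (G : SimpleGraph V) (u v : V) {x : V → ℝ}
    (hx : 0 ≤ x) : ∃ y, y ⬝ᵥ y = x ⬝ᵥ x ∧
      x ⬝ᵥ adjMat G *ᵥ x ≤ y ⬝ᵥ adjMat (kelmans G u v) *ᵥ y := by
  rcases le_total (x v) (x u) with hvu | huv
  · exact ⟨x, rfl, dotProduct_mulVec_adjMat_le_kelmans G u v hx hvu⟩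
  refine ⟨x ∘ Equiv.swap u v, by
    simpa [dotProduct] using Equiv.sum_comp (Equiv.swap u v) fun i => x i * x i, ?_⟩
  calc x ⬝ᵥ adjMat G *ᵥ x ≤ x ⬝ᵥ adjMat (kelmans G v u) *ᵥ x :=
        dotProduct_mulVec_adjMat_le_kelmans G v u hx huv
    _ = _ := by
      rw [← kelmans_comap_swap, adjMat_comap_equiv, dotProduct_submatrix_mulVec_equiv,
        Equiv.symm_swap]

end Kelmans

theorem statement_14 {V : Type*} [Fintype V] (G : SimpleGraph V) (u v : V) :
    specRad G ≤ specRad (kelmans G u v) := by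
  refine Real.sSup_le ?_ (specRad_nonneg _)
  rintro μ ⟨x, hx, hμ⟩
  obtain ⟨y, hyy, hy⟩ := exists_dotProduct_mulVec_kelmans_ge G u v (abs_nonneg x)
  refine le_of_mul_le_mul_right ?_ (dotProduct_self_pos hx)
  calc μ * (x ⬝ᵥ x) = x ⬝ᵥ adjMat G *ᵥ x := (dotProduct_mulVec_of_mulVec_eq_smul hμ).symm
    _ ≤ |x| ⬝ᵥ adjMat G *ᵥ |x| := dotProduct_mulVec_le_abs (adjMat_nonneg G) x
    _ ≤ y ⬝ᵥ adjMat (kelmans G u v) *ᵥ y := hy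
    _ ≤ specRad (kelmans G u v) * (y ⬝ᵥ y) := dotProduct_mulVec_adjMat_le_specRad _ y
    _ = specRad (kelmans G u v) * (x ⬝ᵥ x) := by
      rw [hyy]; simp [dotProduct, abs_mul_abs_self]
end

section
/- Let G be a graph and let G* be obtained from G by a Kelmans transformation on two specified vertices u, v. Then q(G) ≤ q(G*). -/
open SimpleGraph
open scoped Classical
open Matrix

section aux
open Matrix Finset
variable {V : Type*} [Fintype V]

noncomputable def qf (G : SimpleGraph V) (x : V → ℝ) : ℝ :=
  ∑ i, ∑ j, (if G.Adj i j then (x i + x j)^2 else 0)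

lemma deg_eq (G : SimpleGraph V) (i : V) :
    ((G.neighborSet i).ncard : ℝ) = ∑ j, (if G.Adj i j then (1:ℝ) else 0) := by
  classical
  rw [Finset.sum_boole]
  congr 1
  rw [Set.ncard_eq_toFinset_card']
  congr 1
  ext j
  simp [SimpleGraph.neighborSet]
  exact Set.mem_toFinset

lemma herm (G : SimpleGraph V) : (signlessLap G).IsHermitian := by
  classical
  ext i j
  simp only [signlessLap, adjMat, Matrix.conjTranspose_apply, Matrix.add_apply,
    Matrix.diagonal_apply, star_trivial]
  rw [G.adj_comm j i]
  by_cases h : i = j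
  · subst h; simp
  · simp [h, Ne.symm h]

lemma qf_eq (G : SimpleGraph V) (x : V → ℝ) :
    qf G x = 2 * (x ⬝ᵥ (signlessLap G *ᵥ x)) := by
  classical
  set S1 := ∑ i, ∑ j, (if G.Adj i j then (1:ℝ) else 0) * (x i * x i) with hS1
  set S2 := ∑ i, ∑ j, (if G.Adj i j then (1:ℝ) else 0) * (x j * x j) with hS2
  set S3 := ∑ i, ∑ j, (if G.Adj i j then (1:ℝ) else 0) * (x i * x j) with hS3
  have hdot : x ⬝ᵥ (signlessLap G *ᵥ x) = S1 + S3 := by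
    rw [hS1, hS3, ← Finset.sum_add_distrib]
    simp only [signlessLap, Matrix.add_mulVec, dotProduct_add]
    rw [dotProduct, dotProduct, ← Finset.sum_add_distrib]
    refine Finset.sum_congr rfl fun i _ => ?_
    rw [Matrix.mulVec_diagonal, deg_eq]
    have h2 : (adjMat G *ᵥ x) i = ∑ j, (if G.Adj i j then (1:ℝ) else 0) * x j := rfl
    rw [h2, Finset.sum_mul, Finset.mul_sum, Finset.mul_sum]
    congr 1 <;> exact Finset.sum_congr rfl fun j _ => by ring
  have hswap : S2 = S1 := by
    rw [hS1, hS2, Finset.sum_comm]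
    refine Finset.sum_congr rfl fun i _ => Finset.sum_congr rfl fun j _ => ?_
    rw [G.adj_comm j i]
  have hq : qf G x = S1 + S2 + 2 * S3 := by
    rw [hS1, hS2, hS3, Finset.mul_sum, ← Finset.sum_add_distrib, ← Finset.sum_add_distrib]
    refine Finset.sum_congr rfl fun i _ => ?_
    rw [Finset.mul_sum, ← Finset.sum_add_distrib, ← Finset.sum_add_distrib]
    refine Finset.sum_congr rfl fun j _ => ?_
    by_cases h : G.Adj i j <;> simp [h] <;> ring
  rw [hq, hdot, hswap]
  ring
end aux

section kel
variable {V : Type*} (G : SimpleGraph V) {u v w z : V}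
lemma kel_adj_uv (huv : u ≠ v) : (kelmans G u v).Adj u v ↔ G.Adj u v := by
  simp [kelmans, huv, huv.symm, G.irrefl]
lemma kel_adj_uw (huv : u ≠ v) (hwu : w ≠ u) (hwv : w ≠ v) :
    (kelmans G u v).Adj u w ↔ (G.Adj u w ∨ G.Adj v w) := by
  simp [kelmans, huv, huv.symm, hwu, hwv, hwu.symm, hwv.symm, G.irrefl]
lemma kel_adj_vw (huv : u ≠ v) (hwu : w ≠ u) (hwv : w ≠ v) :
    (kelmans G u v).Adj v w ↔ (G.Adj v w ∧ G.Adj u w) := by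
  simp [kelmans, huv, huv.symm, hwu, hwv, hwu.symm, hwv.symm, G.irrefl]
lemma kel_adj_ww (hwu : w ≠ u) (hwv : w ≠ v) (hzu : z ≠ u) (hzv : z ≠ v) :
    (kelmans G u v).Adj w z ↔ G.Adj w z := by
  simp only [kelmans, SimpleGraph.fromRel_adj]
  simp only [hwu, hwv, hzu, hzv, ne_eq, not_false_eq_true, true_and, false_and, and_false,
    false_or, or_false]
  constructor
  · rintro ⟨-, h | h⟩
    · exact h
    · exact h.symm
  · intro h; exact ⟨G.ne_of_adj h, Or.inl h⟩
lemma kel_self (u : V) : kelmans G u u = G := by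
  ext a b
  simp only [kelmans, SimpleGraph.fromRel_adj]
  constructor
  · rintro ⟨hne, h | h⟩
    · rcases h with ⟨rfl, -, h | h⟩ | ⟨rfl, -, h, -⟩ | ⟨rfl, rfl, -⟩ | ⟨-, -, -, -, h⟩ <;>
        first | exact h | exact absurd rfl hne
    · rcases h with ⟨rfl, -, h | h⟩ | ⟨rfl, -, h, -⟩ | ⟨rfl, rfl, -⟩ | ⟨-, -, -, -, h⟩ <;>
        first | exact h.symm | exact absurd rfl hne
  · intro h
    by_cases ha : a = u
    · subst ha
      exact ⟨G.ne_of_adj h, Or.inl (Or.inl ⟨rfl, Ne.symm (G.ne_of_adj h), Or.inl h⟩)⟩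
    · by_cases hb : b = u
      · subst hb
        exact ⟨G.ne_of_adj h, Or.inr (Or.inl ⟨rfl, ha, Or.inl h.symm⟩)⟩
      · exact ⟨G.ne_of_adj h, Or.inl (Or.inr (Or.inr (Or.inr ⟨ha, ha, hb, hb, h⟩)))⟩
end kel

section comb
open Matrix
variable {V : Type*} [Fintype V]

lemma qf_diff (G : SimpleGraph V) {u v : V} (huv : u ≠ v) (x y : V → ℝ)
    (hyuv : y u + y v = x u + x v)
    (hyw : ∀ w, w ≠ u → w ≠ v → y w = x w)
    (hkey : ∀ w, w ≠ u → w ≠ v →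
      (if G.Adj u w then (x u + x w)^2 else 0) + (if G.Adj v w then (x v + x w)^2 else 0)
      ≤ (if (kelmans G u v).Adj u w then (y u + y w)^2 else 0)
        + (if (kelmans G u v).Adj v w then (y v + y w)^2 else 0)) :
    qf G x ≤ qf (kelmans G u v) y := by
  classical
  set K := kelmans G u v with hK
  set f : V → V → ℝ := fun i j => if G.Adj i j then (x i + x j)^2 else 0 with hf
  set g : V → V → ℝ := fun i j => if K.Adj i j then (y i + y j)^2 else 0 with hg
  have fsymm : ∀ i j, f i j = f j i := by
    intro i j; simp only [hf]; rw [G.adj_comm i j, add_comm (x i)]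
  have gsymm : ∀ i j, g i j = g j i := by
    intro i j; simp only [hg]; rw [K.adj_comm i j, add_comm (y i)]
  set s : Finset V := (Finset.univ.erase u).erase v with hs
  have hvs : v ∉ s := Finset.notMem_erase _ _
  have hus : u ∉ insert v s := by
    simp only [Finset.mem_insert, hs, Finset.mem_erase]
    push_neg
    exact ⟨huv, fun _ h => absurd rfl h⟩
  have hmem : ∀ w ∈ s, w ≠ u ∧ w ≠ v := by
    intro w hw
    simp only [hs, Finset.mem_erase] at hw
    exact ⟨hw.2.1, hw.1⟩
  have huniv : (Finset.univ : Finset V) = insert u (insert v s) := by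
    rw [hs, Finset.insert_erase (by simp [huv.symm] : v ∈ Finset.univ.erase u),
      Finset.insert_erase (Finset.mem_univ u)]
  have expand : ∀ h : V → V → ℝ, (∑ i, ∑ j, h i j)
      = (h u u + h u v + h v u + h v v) + (∑ j ∈ s, (h u j + h v j))
        + (∑ i ∈ s, (h i u + h i v)) + (∑ i ∈ s, ∑ j ∈ s, h i j) := by
    intro h
    have inner : ∀ i, (∑ j, h i j) = h i u + (h i v + ∑ j ∈ s, h i j) := fun i => by
      rw [huniv, Finset.sum_insert hus, Finset.sum_insert hvs]
    calc (∑ i, ∑ j, h i j) = ∑ i, (h i u + (h i v + ∑ j ∈ s, h i j)) :=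
          Finset.sum_congr rfl fun i _ => inner i
      _ = (h u u + (h u v + ∑ j ∈ s, h u j)) + ((h v u + (h v v + ∑ j ∈ s, h v j))
            + ∑ i ∈ s, (h i u + (h i v + ∑ j ∈ s, h i j))) := by
          rw [huniv, Finset.sum_insert hus, Finset.sum_insert hvs]
      _ = _ := by simp only [Finset.sum_add_distrib]; ring
  have e1 : qf G x = ∑ i, ∑ j, f i j := rfl
  have e2 : qf K y = ∑ i, ∑ j, g i j := rfl
  rw [e1, e2, expand f, expand g]
  have h1 : f u u + f u v + f v u + f v v = g u u + g u v + g v u + g v v := by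
    have huu : f u u = 0 := if_neg G.irrefl
    have guu : g u u = 0 := if_neg K.irrefl
    have hvv : f v v = 0 := if_neg G.irrefl
    have gvv : g v v = 0 := if_neg K.irrefl
    have huv2 : f u v = g u v := by
      simp only [hf, hg, hK, kel_adj_uv G huv, hyuv]
    rw [huu, guu, hvv, gvv, fsymm v u, gsymm v u, huv2]
  have h2 : (∑ j ∈ s, (f u j + f v j)) ≤ ∑ j ∈ s, (g u j + g v j) := by
    refine Finset.sum_le_sum fun j hj => ?_
    obtain ⟨hju, hjv⟩ := hmem j hj
    exact hkey j hju hjv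
  have h3 : (∑ i ∈ s, (f i u + f i v)) ≤ ∑ i ∈ s, (g i u + g i v) := by
    refine Finset.sum_le_sum fun i hi => ?_
    obtain ⟨hiu, hiv⟩ := hmem i hi
    rw [fsymm i u, fsymm i v, gsymm i u, gsymm i v]
    exact hkey i hiu hiv
  have h4 : (∑ i ∈ s, ∑ j ∈ s, f i j) = ∑ i ∈ s, ∑ j ∈ s, g i j := by
    refine Finset.sum_congr rfl fun i hi => Finset.sum_congr rfl fun j hj => ?_
    obtain ⟨hiu, hiv⟩ := hmem i hi
    obtain ⟨hju, hjv⟩ := hmem j hj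
    simp only [hf, hg, hK, kel_adj_ww G hiu hiv hju hjv, hyw i hiu hiv, hyw j hju hjv]
  exact add_le_add (add_le_add (add_le_add (le_of_eq h1) h2) h3) (le_of_eq h4)

lemma qf_le (G : SimpleGraph V) (u v : V) (x : V → ℝ) (hx : ∀ i, 0 ≤ x i) :
    ∃ y : V → ℝ, y ⬝ᵥ y = x ⬝ᵥ x ∧ qf G x ≤ qf (kelmans G u v) y := by
  classical
  by_cases huv : u = v
  · subst huv; exact ⟨x, rfl, by rw [kel_self]⟩
  by_cases hc : x v ≤ x u
  · refine ⟨x, rfl, ?_⟩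
    refine qf_diff G huv x x rfl (fun _ _ _ => rfl) ?_
    intro w hwu hwv
    have hpow : (x v + x w)^2 ≤ (x u + x w)^2 :=
      pow_le_pow_left₀ (add_nonneg (hx v) (hx w)) (by linarith) 2
    simp only [kel_adj_uw G huv hwu hwv, kel_adj_vw G huv hwu hwv]
    by_cases ha : G.Adj u w <;> by_cases hb : G.Adj v w <;> simp [ha, hb] <;> linarith
  · push_neg at hc
    set y : V → ℝ := fun i => x (Equiv.swap u v i) with hy
    have hyu : y u = x v := by simp [hy]
    have hyv : y v = x u := by simp [hy]
    have hyw : ∀ w, w ≠ u → w ≠ v → y w = x w := by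
      intro w hwu hwv
      simp [hy, Equiv.swap_apply_of_ne_of_ne hwu hwv]
    refine ⟨y, ?_, ?_⟩
    · show (∑ i, y i * y i) = ∑ i, x i * x i
      exact Equiv.sum_comp (Equiv.swap u v) (fun i => x i * x i)
    · refine qf_diff G huv x y (by rw [hyu, hyv, add_comm]) hyw ?_
      intro w hwu hwv
      have hpow : (x u + x w)^2 ≤ (x v + x w)^2 :=
        pow_le_pow_left₀ (add_nonneg (hx u) (hx w)) (by linarith) 2
      simp only [kel_adj_uw G huv hwu hwv, kel_adj_vw G huv hwu hwv, hyu, hyv, hyw w hwu hwv]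
      by_cases ha : G.Adj u w <;> by_cases hb : G.Adj v w <;> simp [ha, hb] <;> linarith
end comb

section spec
variable {V : Type*} [Fintype V] [DecidableEq V]

lemma basis_expand (b : OrthonormalBasis V ℝ (EuclideanSpace ℝ V)) (x : V → ℝ) :
    (∑ i, ((⇑(b i) ⬝ᵥ x) • ⇑(b i))) = x := by
  have h := congrArg WithLp.ofLp (b.sum_repr' (WithLp.toLp 2 x))
  simpa [EuclideanSpace.inner_eq_star_dotProduct, dotProduct_comm] using h

lemma basis_ortho (b : OrthonormalBasis V ℝ (EuclideanSpace ℝ V)) (i j : V) :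
    (⇑(b i) ⬝ᵥ ⇑(b j)) = if i = j then 1 else 0 := by
  have h := (orthonormal_iff_ite.mp b.orthonormal) i j
  simpa [EuclideanSpace.inner_eq_star_dotProduct, dotProduct_comm] using h

lemma dotProduct_sumr {ι : Type*} (s : Finset ι) (v : V → ℝ) (f : ι → V → ℝ) :
    v ⬝ᵥ (∑ i ∈ s, f i) = ∑ i ∈ s, v ⬝ᵥ f i := by
  unfold dotProduct
  simp_rw [Finset.sum_apply, Finset.mul_sum]
  rw [Finset.sum_comm]

lemma sumr_dotProduct {ι : Type*} (s : Finset ι) (v : V → ℝ) (f : ι → V → ℝ) :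
    (∑ i ∈ s, f i) ⬝ᵥ v = ∑ i ∈ s, f i ⬝ᵥ v := by
  unfold dotProduct
  simp_rw [Finset.sum_apply, Finset.sum_mul]
  rw [Finset.sum_comm]

lemma rayleigh_le {A : Matrix V V ℝ} (hA : A.IsHermitian) {t : ℝ}
    (ht : ∀ i, hA.eigenvalues i ≤ t) (x : V → ℝ) :
    x ⬝ᵥ (A *ᵥ x) ≤ t * (x ⬝ᵥ x) := by
  set b := hA.eigenvectorBasis with hb
  set c : V → ℝ := fun i => ⇑(b i) ⬝ᵥ x with hc
  have hx : (∑ i, c i • ⇑(b i)) = x := basis_expand b x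
  have hAx : A *ᵥ x = ∑ i, c i • (hA.eigenvalues i • ⇑(b i)) := by
    rw [← hx]
    rw [show A *ᵥ (∑ i, c i • ⇑(b i)) = A.mulVecLin (∑ i, c i • ⇑(b i)) from rfl]
    rw [map_sum]
    refine Finset.sum_congr rfl fun i _ => ?_
    rw [_root_.map_smul]
    rw [show A.mulVecLin ⇑(b i) = A *ᵥ ⇑(b i) from rfl, hA.mulVec_eigenvectorBasis]
  have hdot : x ⬝ᵥ (A *ᵥ x) = ∑ i, hA.eigenvalues i * (c i * c i) := by
    rw [hAx, dotProduct_sumr]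
    refine Finset.sum_congr rfl fun i _ => ?_
    rw [dotProduct_smul, dotProduct_smul, dotProduct_comm]
    simp only [smul_eq_mul, ← hc]
    ring
  have hxx : x ⬝ᵥ x = ∑ i, c i * c i := by
    calc x ⬝ᵥ x = (∑ i, c i • ⇑(b i)) ⬝ᵥ x := by rw [hx]
      _ = ∑ i, c i * c i := by
          rw [sumr_dotProduct]
          refine Finset.sum_congr rfl fun i _ => ?_
          rw [smul_dotProduct]
          simp only [smul_eq_mul]
          rfl
  rw [hdot, hxx, Finset.mul_sum]
  refine Finset.sum_le_sum fun i _ => ?_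
  exact mul_le_mul_of_nonneg_right (ht i) (mul_self_nonneg _)

lemma eig_ne (b : OrthonormalBasis V ℝ (EuclideanSpace ℝ V)) (i : V) : ⇑(b i) ≠ 0 := by
  intro h
  have h1 := basis_ortho b i i
  rw [if_pos rfl, h, zero_dotProduct] at h1
  exact zero_ne_one h1
end spec


section main
open Matrix

lemma abs_dot_le {V : Type*} [Fintype V] (A : Matrix V V ℝ) (hA : ∀ i j, 0 ≤ A i j)
    (z : V → ℝ) : z ⬝ᵥ (A *ᵥ z) ≤ (fun i => |z i|) ⬝ᵥ (A *ᵥ fun i => |z i|) := by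
  unfold dotProduct Matrix.mulVec dotProduct
  simp_rw [Finset.mul_sum]
  refine Finset.sum_le_sum fun i _ => Finset.sum_le_sum fun j _ => ?_
  calc z i * (A i j * z j) ≤ |z i * (A i j * z j)| := le_abs_self _
    _ = |z i| * (A i j * |z j|) := by
        rw [abs_mul, abs_mul, abs_of_nonneg (hA i j)]
        try ring
end main

theorem statement_15 {V : Type*} [Fintype V] (G : SimpleGraph V) (u v : V) :
    qRad G ≤ qRad (kelmans G u v) := by
  classical
  cases isEmpty_or_nonempty V with
  | inl hV =>
    have hz : ∀ H : SimpleGraph V, qRad H = 0 := by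
      intro H
      unfold qRad
      have he : {μ : ℝ | ∃ x : V → ℝ, x ≠ 0 ∧ (signlessLap H).mulVec x = μ • x} = ∅ := by
        ext μ
        simp only [Set.mem_setOf_eq, Set.mem_empty_iff_false, iff_false, not_exists]
        rintro x ⟨hx, -⟩
        exact hx (funext fun i => (hV.false i).elim)
      rw [he, Real.sSup_empty]
    rw [hz G, hz (kelmans G u v)]
  | inr hV =>
    set K := kelmans G u v with hK
    have hQ := herm G
    have hN := herm K
    obtain ⟨iM, hiM⟩ := Finite.exists_max hQ.eigenvalues
    obtain ⟨iN, hiN⟩ := Finite.exists_max hN.eigenvalues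
    set lM := hQ.eigenvalues iM with hlM
    set lN := hN.eigenvalues iN with hlN
    have memM : lM ∈ {μ : ℝ | ∃ x : V → ℝ, x ≠ 0 ∧ (signlessLap G).mulVec x = μ • x} :=
      ⟨⇑(hQ.eigenvectorBasis iM), eig_ne _ iM, hQ.mulVec_eigenvectorBasis iM⟩
    have memN : lN ∈ {μ : ℝ | ∃ x : V → ℝ, x ≠ 0 ∧ (signlessLap K).mulVec x = μ • x} :=
      ⟨⇑(hN.eigenvectorBasis iN), eig_ne _ iN, hN.mulVec_eigenvectorBasis iN⟩
    have dppos : ∀ x : V → ℝ, x ≠ 0 → 0 < x ⬝ᵥ x := by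
      intro x hx
      rcases lt_or_eq_of_le (Finset.sum_nonneg fun i _ => mul_self_nonneg (x i) :
        (0:ℝ) ≤ x ⬝ᵥ x) with h | h
      · exact h
      · exact absurd (dotProduct_self_eq_zero.mp h.symm) hx
    have bnd : ∀ (H : SimpleGraph V) (hH : (signlessLap H).IsHermitian) (t : ℝ),
        (∀ i, hH.eigenvalues i ≤ t) →
        ∀ μ ∈ {μ : ℝ | ∃ x : V → ℝ, x ≠ 0 ∧ (signlessLap H).mulVec x = μ • x}, μ ≤ t := by
      rintro H hH t ht μ ⟨x, hx0, hxe⟩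
      have hray := rayleigh_le hH ht x
      have he : x ⬝ᵥ ((signlessLap H) *ᵥ x) = μ * (x ⬝ᵥ x) := by
        rw [show (signlessLap H) *ᵥ x = (signlessLap H).mulVec x from rfl, hxe,
          dotProduct_smul, smul_eq_mul]
      have hpos := dppos x hx0
      rw [he] at hray
      exact le_of_mul_le_mul_right (by linarith) hpos
    have bndM := bnd G hQ lM hiM
    have bndN := bnd K hN lN hiN
    have h1 : qRad G ≤ lM := csSup_le ⟨lM, memM⟩ bndM
    have h2 : lN ≤ qRad K := le_csSup ⟨lN, bndN⟩ memN
    -- now prove lM ≤ lN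
    set v0 : V → ℝ := ⇑(hQ.eigenvectorBasis iM) with hv0
    set x : V → ℝ := fun i => |v0 i| with hx
    have hent : ∀ i j, 0 ≤ signlessLap G i j := by
      intro i j
      unfold signlessLap
      simp only [Matrix.add_apply, Matrix.diagonal_apply, adjMat]
      have a1 : (0:ℝ) ≤ if i = j then ((G.neighborSet i).ncard : ℝ) else 0 := by positivity
      have a2 : (0:ℝ) ≤ if G.Adj i j then (1:ℝ) else 0 := by positivity
      linarith
    have habs : v0 ⬝ᵥ ((signlessLap G) *ᵥ v0) ≤ x ⬝ᵥ ((signlessLap G) *ᵥ x) :=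
      abs_dot_le _ hent v0
    have e1 : v0 ⬝ᵥ ((signlessLap G) *ᵥ v0) = lM * (v0 ⬝ᵥ v0) := by
      rw [show (signlessLap G) *ᵥ v0 = lM • v0 from hQ.mulVec_eigenvectorBasis iM,
        dotProduct_smul, smul_eq_mul]
    have e2 : x ⬝ᵥ x = v0 ⬝ᵥ v0 :=
      Finset.sum_congr rfl fun i _ => abs_mul_abs_self (v0 i)
    obtain ⟨y, hyy, hqf⟩ := qf_le G u v x (fun i => abs_nonneg _)
    have d1 : qf G x = 2 * (x ⬝ᵥ ((signlessLap G) *ᵥ x)) := qf_eq G x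
    have d2 : qf K y = 2 * (y ⬝ᵥ ((signlessLap K) *ᵥ y)) := qf_eq K y
    have ray : y ⬝ᵥ ((signlessLap K) *ᵥ y) ≤ lN * (y ⬝ᵥ y) := rayleigh_le hN hiN y
    have hpos : 0 < v0 ⬝ᵥ v0 := dppos v0 (eig_ne _ iM)
    have hfin : lM * (v0 ⬝ᵥ v0) ≤ lN * (v0 ⬝ᵥ v0) := by
      rw [hyy, e2] at ray
      linarith [habs, e1, hqf, d1, d2, ray]
    have h3 : lM ≤ lN := le_of_mul_le_mul_right hfin hpos
    calc qRad G ≤ lM := h1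
      _ ≤ lN := h3
      _ ≤ qRad K := h2
end

section
/- Let G be a graph on n vertices with m edges and minimum degree δ. Then ρ(G) ≤ (δ-1)/2 + √(2m - nδ + (δ+1)²/4). -/
/-!
Let `μ ≥ 0` be an eigenvalue of `A = A(G)` with eigenvector `x`, and put `y = |x|`, so that
`A y ≥ μ y` entrywise. Every vertex outside the closed neighbourhood of `w` has degree at least
`δ`, so `∑_{u ∼ w} d(u) ≤ 2m - (n - 1)δ + (δ - 1) d(w)`; that is, `1ᵀA² ≤ c 1ᵀ + (δ - 1) 1ᵀA`
with `c = 2m - (n - 1)δ`. Pairing with `y ≥ 0` and using `1ᵀA²y ≥ μ 1ᵀAy ≥ μ² 1ᵀy` gives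
`μ² ≤ (δ - 1)μ + c`, and the bound is the larger root of this quadratic.
-/

open SimpleGraph
open scoped Classical

open Finset Matrix

namespace Matrix

variable {ι : Type*} [Fintype ι] {A : Matrix ι ι ℝ}

lemma mulVec_mono_of_nonneg (hA : ∀ i j, 0 ≤ A i j) {x y : ι → ℝ} (h : x ≤ y) :
    A *ᵥ x ≤ A *ᵥ y :=
  fun i => dotProduct_le_dotProduct_of_nonneg_left h (fun j => hA i j)

lemma smul_abs_le_mulVec_abs (hA : ∀ i j, 0 ≤ A i j) {μ : ℝ} (hμ : 0 ≤ μ) {x : ι → ℝ}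
    (hx : A *ᵥ x = μ • x) : μ • |x| ≤ A *ᵥ |x| := by
  intro i
  calc μ * |x i| = |(A *ᵥ x) i| := by
        rw [hx, Pi.smul_apply, smul_eq_mul, abs_mul, abs_of_nonneg hμ]
    _ = |∑ j, A i j * x j| := rfl
    _ ≤ ∑ j, |A i j * x j| := abs_sum_le_sum_abs _ _
    _ = ∑ j, A i j * |x j| := by simp only [abs_mul, abs_of_nonneg (hA i _)]

lemma sq_le_of_smul_le_mulVec (hA : ∀ i j, 0 ≤ A i j) {y : ι → ℝ} (hy : 0 ≤ y) (hy0 : y ≠ 0)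
    {μ b c : ℝ} (hAy : μ • y ≤ A *ᵥ y) (hbμ : b ≤ μ)
    (hc : 1 ᵥ* (A * A) ≤ c • 1 + b • (1 ᵥ* A)) : μ ^ 2 ≤ b * μ + c := by
  set s := 1 ⬝ᵥ y
  set t := 1 ⬝ᵥ (A *ᵥ y)
  have hs : 0 < s := by
    refine (dotProduct_nonneg_of_nonneg zero_le_one hy).lt_of_ne fun hs => hy0 ?_
    rw [eq_comm, one_dotProduct, sum_eq_zero_iff_of_nonneg fun i _ => hy i] at hs
    exact funext fun i => hs i (mem_univ i)
  have hμt : μ * s ≤ t := by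
    rw [← smul_eq_mul, ← dotProduct_smul]
    exact dotProduct_le_dotProduct_of_nonneg_left hAy zero_le_one
  have hμAy : μ * t ≤ 1 ⬝ᵥ (A *ᵥ (A *ᵥ y)) := by
    rw [← smul_eq_mul, ← dotProduct_smul, ← mulVec_smul]
    exact dotProduct_le_dotProduct_of_nonneg_left (mulVec_mono_of_nonneg hA hAy) zero_le_one
  have hAAy : 1 ⬝ᵥ (A *ᵥ (A *ᵥ y)) ≤ c * s + b * t := by
    calc 1 ⬝ᵥ (A *ᵥ (A *ᵥ y)) = (1 ᵥ* (A * A)) ⬝ᵥ y := by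
          rw [dotProduct_mulVec, dotProduct_mulVec, vecMul_vecMul]
      _ ≤ (c • 1 + b • (1 ᵥ* A)) ⬝ᵥ y := dotProduct_le_dotProduct_of_nonneg_right hc hy
      _ = c * s + b * t := by rw [add_dotProduct, smul_dotProduct, smul_dotProduct,
          ← dotProduct_mulVec]; rfl
  have hbt : (μ - b) * (μ * s) ≤ (μ - b) * t := mul_le_mul_of_nonneg_left hμt (sub_nonneg.2 hbμ)
  nlinarith

end Matrix

lemma le_half_add_sqrt_of_sq_le {μ b c : ℝ} (h : μ ^ 2 ≤ b * μ + c) :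
    μ ≤ b / 2 + √(b ^ 2 / 4 + c) := by
  have := Real.abs_le_sqrt (x := μ - b / 2) (y := b ^ 2 / 4 + c) (by nlinarith)
  linarith [le_abs_self (μ - b / 2)]

namespace SimpleGraph

variable {V : Type*} [Fintype V] (G : SimpleGraph V) [DecidableRel G.Adj] {δ : ℕ}

lemma card_mul_le_two_mul_card_edgeFinset (hδ : ∀ v, δ ≤ G.degree v) :
    Fintype.card V * δ ≤ 2 * #G.edgeFinset := by
  rw [← sum_degrees_eq_twice_card_edges, ← smul_eq_mul, ← card_univ]
  exact card_nsmul_le_sum _ _ _ fun v _ => hδ v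

variable [DecidableEq V]

lemma sum_degree_neighborFinset_le (hδ : ∀ v, δ ≤ G.degree v) (w : V) :
    ∑ u ∈ G.neighborFinset w, (G.degree u : ℝ) ≤
      2 * #G.edgeFinset - (Fintype.card V - 1) * δ + (δ - 1) * G.degree w := by
  set N := insert w (G.neighborFinset w)
  have hw := G.notMem_neighborFinset_self w
  have hcard : (#Nᶜ : ℝ) = Fintype.card V - (G.degree w + 1) := by
    rw [card_compl, card_insert_of_notMem hw, card_neighborFinset_eq_degree,
      Nat.cast_sub (G.degree_lt_card_verts w), Nat.cast_succ]
  have hfar : #Nᶜ • (δ : ℝ) ≤ ∑ u ∈ Nᶜ, (G.degree u : ℝ) :=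
    card_nsmul_le_sum _ _ _ fun u _ => by exact_mod_cast hδ u
  have htotal :
      ∑ u ∈ N, (G.degree u : ℝ) + ∑ u ∈ Nᶜ, (G.degree u : ℝ) = 2 * #G.edgeFinset := by
    rw [sum_add_sum_compl]; exact_mod_cast G.sum_degrees_eq_twice_card_edges
  rw [sum_insert hw] at htotal
  rw [nsmul_eq_mul, hcard] at hfar
  linarith

lemma vecMul_adjMatrix_mul_self_le (hδ : ∀ v, δ ≤ G.degree v) :
    (1 : V → ℝ) ᵥ* (G.adjMatrix ℝ * G.adjMatrix ℝ) ≤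
      ((2 * #G.edgeFinset - (Fintype.card V - 1) * δ : ℝ)) • 1 +
        ((δ : ℝ) - 1) • (1 ᵥ* G.adjMatrix ℝ) := by
  have hdeg : (1 : V → ℝ) ᵥ* G.adjMatrix ℝ = fun v => (G.degree v : ℝ) := by
    ext v; simp [adjMatrix_vecMul_apply]
  intro w
  rw [← vecMul_vecMul, hdeg, adjMatrix_vecMul_apply]
  simpa [mul_comm] using G.sum_degree_neighborFinset_le hδ w

lemma sq_le_of_adjMatrix_mulVec_eq (hδ : ∀ v, δ ≤ G.degree v) {μ : ℝ} (hμ : 0 ≤ μ)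
    {x : V → ℝ} (hx0 : x ≠ 0) (hx : G.adjMatrix ℝ *ᵥ x = μ • x) :
    μ ^ 2 ≤ (δ - 1) * μ + (2 * #G.edgeFinset - (Fintype.card V - 1) * δ) := by
  have hA : ∀ i j, 0 ≤ G.adjMatrix ℝ i j := fun i j => by
    rw [adjMatrix_apply]; split_ifs <;> norm_num
  rcases le_or_gt ((δ : ℝ) - 1) μ with hbμ | hμb
  · exact sq_le_of_smul_le_mulVec hA (abs_nonneg x) (by simpa using hx0)
      (smul_abs_le_mulVec_abs hA hμ hx) hbμ (G.vecMul_adjMatrix_mul_self_le hδ)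
  · have hnδ : (Fintype.card V : ℝ) * δ ≤ 2 * #G.edgeFinset := by
      exact_mod_cast G.card_mul_le_two_mul_card_edgeFinset hδ
    nlinarith

end SimpleGraph

theorem statement_16 (n : ℕ) (G : SimpleGraph (Fin n)) (m δ : ℕ)
    (hm : m = G.edgeSet.ncard) (hδ : δ = ⨅ v, (G.neighborSet v).ncard) :
    specRad G ≤ ((δ : ℝ) - 1) / 2 +
      Real.sqrt (2 * (m : ℝ) - (n : ℝ) * (δ : ℝ) + ((δ : ℝ) + 1) ^ 2 / 4) := by
  have hdeg : ∀ v, δ ≤ G.degree v := fun v => by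
    rw [hδ, ← card_neighborSet_eq_degree, ← Nat.card_eq_fintype_card, Nat.card_coe_set_eq]
    exact ciInf_le (OrderBot.bddBelow _) v
  have hm' : (m : ℝ) = #G.edgeFinset := by
    rw [hm, ← coe_edgeFinset, Set.ncard_coe_finset]
  have hnδ : (n : ℝ) * δ ≤ 2 * #G.edgeFinset := by
    exact_mod_cast Fintype.card_fin n ▸ G.card_mul_le_two_mul_card_edgeFinset hdeg
  have hR : 2 * (m : ℝ) - n * δ + ((δ : ℝ) + 1) ^ 2 / 4 =
      ((δ : ℝ) - 1) ^ 2 / 4 + (2 * #G.edgeFinset - (Fintype.card (Fin n) - 1) * δ) := by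
    rw [hm', Fintype.card_fin]; ring
  have hR0 := le_half_add_sqrt_of_sq_le (μ := 0) (b := (δ : ℝ) - 1)
    (c := 2 * #G.edgeFinset - (Fintype.card (Fin n) - 1) * δ) (by linarith)
  rw [hR]
  refine Real.sSup_le ?_ hR0
  rintro μ ⟨x, hx0, hx⟩
  rcases le_or_gt μ 0 with hμ | hμ
  · exact hμ.trans hR0
  · exact le_half_add_sqrt_of_sq_le (G.sq_le_of_adjMatrix_mulVec_eq hdeg hμ.le hx0 hx)
end
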